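/- In the graph G'_φ built from a (3,3)-CNF formula φ (each variable vertex replaced by a 6-cycle with positive literal occurrences attached to the even-indexed cycle vertices and negative occurrences to odd-indexed ones, and each clause of size 3 replaced by a triangle and each clause of size 2 by an edge, with clause-literal edges connecting variable-cycle vertices to distinct clause-gadget vertices), the maximum independent set of G'_φ has size 3ν + γ if and only if φ is satisfiable, where ν is the number of variables and γ the number of clauses. -/
import Mathlib

lemma fin6_div2 : ∀ i j : Fin 6, i ≠ j → i.val / 2 = j.val / 2 → j = i + 1 ∨ i = j + 1 := by decide
lemma fin6_indep3 : ∀ T : Finset (Fin 6), T.card = 3 → (∀ i ∈ T, ∀ j ∈ T, j ≠ i + 1) →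
    T = {0,2,4} ∨ T = {1,3,5} := by decide
lemma fin6_odd : ∀ i : Fin 6, i.val % 2 = 1 → i ∈ ({1,3,5} : Finset (Fin 6)) := by decide
lemma fin6_even : ∀ i : Fin 6, i.val % 2 = 0 → i ∈ ({0,2,4} : Finset (Fin 6)) := by decide
lemma fin6_ne_succ : ∀ i : Fin 6, i ≠ i + 1 := by decide

def bInd (b : Bool) : Finset (Fin 6) := if b then {0,2,4} else {1,3,5}

lemma bInd_card : ∀ b, (bInd b).card = 3 := by decide
lemma bInd_par : ∀ b, ∀ i ∈ bInd b, i.val % 2 = if b then 0 else 1 := by decide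
lemma bInd_nadj : ∀ b, ∀ i ∈ bInd b, ∀ j ∈ bInd b, j ≠ i + 1 := by decide



/-- The independence number of a graph, as the supremum of sizes of independent sets. -/
noncomputable def myIndepNum {W : Type*} (G : SimpleGraph W) : ℕ :=
  sSup {n : ℕ | ∃ s : Finset W, s.card = n ∧
    ∀ a ∈ s, ∀ b ∈ s, a ≠ b → ¬ G.Adj a b}

/-- Let `φ` be a (3,3)-CNF formula with variable set `V` (ν = |V|) and
clause set `C` (γ = |C|), where clause `c` has literal set `L c` (a set of
variable/polarity pairs of size 2 or 3) and each variable occurs at most 3 times.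
Build the graph `G'_φ`: each variable `v` becomes a 6-cycle on `(v,0),…,(v,5)` (indices
`0,…,5` standing for `v¹,…,v⁶`), each clause becomes a clique on its literal-occurrence
vertices (a triangle or an edge), and each occurrence of a literal `(v,b)` in clause `c`
is wired to the cycle vertex `(v, attach c (v,b))`, where positive occurrences attach to
odd-indexed (i.e. `v²,v⁴,v⁶`) and negative ones to even-indexed cycle vertices, distinct
occurrences of a variable attaching to distinct cycle vertices.  Then the maximum
independent set of `G'_φ` has size `3ν + γ` iff `φ` is satisfiable. -/
theorem sat_gadget_indepNum
    (V : Type*) [Fintype V] [DecidableEq V]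
    (C : Type*) [Fintype C] [DecidableEq C]
    (L : C → Finset (V × Bool))
    (hsize : ∀ c, (L c).card = 2 ∨ (L c).card = 3)
    (hocc : ∀ v : V, (Finset.univ.filter
      (fun cb : C × Bool => (v, cb.2) ∈ L cb.1)).card ≤ 3)
    (attach : C → V × Bool → Fin 6)
    (hpar : ∀ c : C, ∀ l : V × Bool, l ∈ L c →
      ((attach c l : ℕ) % 2 = if l.2 then 1 else 0))
    (hinj : ∀ (c c' : C) (l l' : V × Bool), l ∈ L c → l' ∈ L c' →
      l.1 = l'.1 → (c, l) ≠ (c', l') → attach c l ≠ attach c' l')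
    (G' : SimpleGraph ((V × Fin 6) ⊕ {p : C × (V × Bool) // p.2 ∈ L p.1}))
    (hG' : G' = SimpleGraph.fromRel (fun x y =>
      (∃ (v : V) (i : Fin 6), x = Sum.inl (v, i) ∧ y = Sum.inl (v, i + 1)) ∨
      (∃ p q : {p : C × (V × Bool) // p.2 ∈ L p.1},
        x = Sum.inr p ∧ y = Sum.inr q ∧ p.1.1 = q.1.1 ∧ p ≠ q) ∨
      (∃ p : {p : C × (V × Bool) // p.2 ∈ L p.1},
        x = Sum.inr p ∧ y = Sum.inl (p.1.2.1, attach p.1.1 p.1.2)))) :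
    myIndepNum G' = 3 * Fintype.card V + Fintype.card C ↔
      ∃ f : V → Bool, ∀ c : C, ∃ l ∈ L c, f l.1 = l.2 := by
  classical
  subst hG'
  set R : ((V × Fin 6) ⊕ {p : C × (V × Bool) // p.2 ∈ L p.1}) →
      ((V × Fin 6) ⊕ {p : C × (V × Bool) // p.2 ∈ L p.1}) → Prop := fun x y =>
      (∃ (v : V) (i : Fin 6), x = Sum.inl (v, i) ∧ y = Sum.inl (v, i + 1)) ∨
      (∃ p q : {p : C × (V × Bool) // p.2 ∈ L p.1},
        x = Sum.inr p ∧ y = Sum.inr q ∧ p.1.1 = q.1.1 ∧ p ≠ q) ∨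
      (∃ p : {p : C × (V × Bool) // p.2 ∈ L p.1},
        x = Sum.inr p ∧ y = Sum.inl (p.1.2.1, attach p.1.1 p.1.2)) with hR
  have hAdj : ∀ x y, (SimpleGraph.fromRel R).Adj x y ↔ x ≠ y ∧ (R x y ∨ R y x) :=
    fun x y => SimpleGraph.fromRel_adj R x y
  have hRiff : ∀ x y, R x y ↔
      ((∃ (v : V) (i : Fin 6), x = Sum.inl (v, i) ∧ y = Sum.inl (v, i + 1)) ∨
      (∃ p q : {p : C × (V × Bool) // p.2 ∈ L p.1},
        x = Sum.inr p ∧ y = Sum.inr q ∧ p.1.1 = q.1.1 ∧ p ≠ q) ∨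
      (∃ p : {p : C × (V × Bool) // p.2 ∈ L p.1},
        x = Sum.inr p ∧ y = Sum.inl (p.1.2.1, attach p.1.1 p.1.2))) := by
    intro x y; rw [hR]
  -- the projection to gadgets
  set g : ((V × Fin 6) ⊕ {p : C × (V × Bool) // p.2 ∈ L p.1}) → V ⊕ C :=
    Sum.elim (fun vi => Sum.inl vi.1) (fun p => Sum.inr p.1.1) with hg
  -- bound on each fiber of an independent set
  have hfib : ∀ s : Finset ((V × Fin 6) ⊕ {p : C × (V × Bool) // p.2 ∈ L p.1}),
      (∀ a ∈ s, ∀ b ∈ s, a ≠ b → ¬ (SimpleGraph.fromRel R).Adj a b) →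
      ∀ t : V ⊕ C, (s.filter (fun x => g x = t)).card ≤
        Sum.elim (fun _ : V => 3) (fun _ : C => 1) t := by
    intro s hs t
    rcases t with v | c
    · simp only [Sum.elim_inl]
      by_contra hlt
      push_neg at hlt
      have hshape : ∀ x ∈ s.filter (fun x => g x = Sum.inl v),
          ∃ i : Fin 6, x = Sum.inl (v, i) := by
        intro x hx
        rcases Finset.mem_filter.mp hx with ⟨-, hgx⟩
        rcases x with vi | p
        · simp only [hg, Sum.elim_inl, Sum.inl.injEq] at hgx
          exact ⟨vi.2, by rw [← hgx]⟩
        · simp [hg] at hgx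
      obtain ⟨a, ha, b, hb, hab, habeq⟩ :=
        Finset.exists_ne_map_eq_of_card_lt_of_maps_to (t := (Finset.univ : Finset (Fin 3)))
          (by simpa using hlt)
          (f := Sum.elim (fun vi : V × Fin 6 => (⟨vi.2.val / 2, by omega⟩ : Fin 3))
            (fun _ => 0))
          (fun x _ => Finset.mem_univ _)
      obtain ⟨i, rfl⟩ := hshape a ha
      obtain ⟨j, rfl⟩ := hshape b hb
      have hij : i ≠ j := fun h => hab (by rw [h])
      have hdiv : i.val / 2 = j.val / 2 := by
        simpa using habeq
      have has : Sum.inl (v, i) ∈ s := (Finset.mem_filter.mp ha).1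
      have hbs : Sum.inl (v, j) ∈ s := (Finset.mem_filter.mp hb).1
      rcases fin6_div2 i j hij hdiv with h1 | h1
      · exact hs _ has _ hbs hab ((hAdj _ _).mpr ⟨hab, Or.inl ((hRiff _ _).mpr
          (Or.inl ⟨v, i, rfl, by rw [h1]⟩))⟩)
      · exact hs _ has _ hbs hab ((hAdj _ _).mpr ⟨hab, Or.inr ((hRiff _ _).mpr
          (Or.inl ⟨v, j, rfl, by rw [h1]⟩))⟩)
    · simp only [Sum.elim_inr]
      refine Finset.card_le_one.mpr ?_
      intro a ha b hb
      by_contra hab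
      obtain ⟨has, hga⟩ := Finset.mem_filter.mp ha
      obtain ⟨hbs, hgb⟩ := Finset.mem_filter.mp hb
      rcases a with vi | p
      · simp [hg] at hga
      rcases b with wi | q
      · simp [hg] at hgb
      have hpc : p.1.1 = c := by simpa [hg] using hga
      have hqc : q.1.1 = c := by simpa [hg] using hgb
      have hpq : p ≠ q := fun h => hab (by rw [h])
      exact hs _ has _ hbs hab ((hAdj _ _).mpr ⟨hab, Or.inl ((hRiff _ _).mpr
        (Or.inr (Or.inl ⟨p, q, rfl, rfl, hpc.trans hqc.symm, hpq⟩)))⟩)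
  have hbndsum : ∑ t : V ⊕ C, Sum.elim (fun _ : V => 3) (fun _ : C => 1) t
      = 3 * Fintype.card V + Fintype.card C := by
    rw [Fintype.sum_sum_type]
    simp [Finset.sum_const, mul_comm]
  have hub : ∀ s : Finset ((V × Fin 6) ⊕ {p : C × (V × Bool) // p.2 ∈ L p.1}),
      (∀ a ∈ s, ∀ b ∈ s, a ≠ b → ¬ (SimpleGraph.fromRel R).Adj a b) →
      s.card ≤ 3 * Fintype.card V + Fintype.card C := by
    intro s hs
    rw [Finset.card_eq_sum_card_fiberwise (f := g) (t := Finset.univ) (fun x _ => Finset.mem_univ _)]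
    calc ∑ t : V ⊕ C, (s.filter (fun x => g x = t)).card
        ≤ ∑ t : V ⊕ C, Sum.elim (fun _ : V => 3) (fun _ : C => 1) t :=
          Finset.sum_le_sum (fun t _ => hfib s hs t)
      _ = _ := hbndsum
  have h0 : (0 : ℕ) ∈ {n : ℕ | ∃ s : Finset ((V × Fin 6) ⊕ {p : C × (V × Bool) // p.2 ∈ L p.1}),
      s.card = n ∧ ∀ a ∈ s, ∀ b ∈ s, a ≠ b → ¬ (SimpleGraph.fromRel R).Adj a b} :=
    ⟨∅, by simp⟩
  have hbdd : BddAbove {n : ℕ | ∃ s : Finset ((V × Fin 6) ⊕ {p : C × (V × Bool) // p.2 ∈ L p.1}),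
      s.card = n ∧ ∀ a ∈ s, ∀ b ∈ s, a ≠ b → ¬ (SimpleGraph.fromRel R).Adj a b} := by
    refine ⟨3 * Fintype.card V + Fintype.card C, ?_⟩
    rintro n ⟨s, rfl, hs⟩
    exact hub s hs
  unfold myIndepNum
  constructor
  · -- forward: extract satisfying assignment
    intro h
    have hmem : 3 * Fintype.card V + Fintype.card C ∈
        {n : ℕ | ∃ s : Finset ((V × Fin 6) ⊕ {p : C × (V × Bool) // p.2 ∈ L p.1}),
          s.card = n ∧ ∀ a ∈ s, ∀ b ∈ s, a ≠ b → ¬ (SimpleGraph.fromRel R).Adj a b} := by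
      rw [← h]
      exact Nat.sSup_mem ⟨0, h0⟩ hbdd
    obtain ⟨s, hcard, hind⟩ := hmem
    have hsum : s.card = ∑ t : V ⊕ C, (s.filter (fun x => g x = t)).card :=
      Finset.card_eq_sum_card_fiberwise (fun x _ => Finset.mem_univ _)
    have heq : ∀ t ∈ (Finset.univ : Finset (V ⊕ C)),
        (s.filter (fun x => g x = t)).card = Sum.elim (fun _ : V => 3) (fun _ : C => 1) t :=
      (Finset.sum_eq_sum_iff_of_le (fun t _ => hfib s hind t)).mp
        (by rw [← hsum, hcard, hbndsum])
    have hT : ∀ v : V, (Finset.univ.filter (fun i : Fin 6 => Sum.inl (v, i) ∈ s)) = {0,2,4} ∨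
        (Finset.univ.filter (fun i : Fin 6 => Sum.inl (v, i) ∈ s)) = {1,3,5} := by
      intro v
      apply fin6_indep3
      · have hfil : s.filter (fun x => g x = Sum.inl v) =
            (Finset.univ.filter (fun i : Fin 6 => Sum.inl (v, i) ∈ s)).image
              (fun i => Sum.inl (v, i)) := by
          ext x
          simp only [Finset.mem_filter, Finset.mem_image, Finset.mem_univ, true_and]
          constructor
          · rintro ⟨hxs, hgx⟩
            rcases x with ⟨w, i⟩ | p
            · simp only [hg, Sum.elim_inl, Sum.inl.injEq] at hgx
              subst hgx
              exact ⟨i, hxs, rfl⟩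
            · simp [hg] at hgx
          · rintro ⟨i, hi, rfl⟩
            exact ⟨hi, by simp [hg]⟩
        have hc3 := heq (Sum.inl v) (Finset.mem_univ _)
        rw [hfil, Finset.card_image_of_injective _ (fun i j hh => by simpa using hh)] at hc3
        simpa using hc3
      · intro i hi j hj hji
        simp only [Finset.mem_filter] at hi hj
        have hne : (Sum.inl (v, i) : (V × Fin 6) ⊕ {p : C × (V × Bool) // p.2 ∈ L p.1})
            ≠ Sum.inl (v, j) := by
          rw [hji]
          intro hcon
          exact fin6_ne_succ i (by simp at hcon)
        exact hind _ hi.2 _ hj.2 hne ((hAdj _ _).mpr ⟨hne, Or.inl ((hRiff _ _).mpr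
          (Or.inl ⟨v, i, rfl, by rw [hji]⟩))⟩)
    refine ⟨fun v => if Sum.inl (v, (0 : Fin 6)) ∈ s then true else false, ?_⟩
    have hTf : ∀ v : V, (Finset.univ.filter (fun i : Fin 6 => Sum.inl (v, i) ∈ s)) =
        bInd (if Sum.inl (v, (0 : Fin 6)) ∈ s then true else false) := by
      intro v
      rcases hT v with hTv | hTv
      · have h0m : Sum.inl (v, (0 : Fin 6)) ∈ s := by
          have h0' : (0 : Fin 6) ∈ Finset.univ.filter (fun i : Fin 6 => Sum.inl (v, i) ∈ s) := by
            rw [hTv]; decide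
          exact (Finset.mem_filter.mp h0').2
        rw [if_pos h0m, hTv]; rfl
      · have h0m : Sum.inl (v, (0 : Fin 6)) ∉ s := by
          intro hc
          have h0' : (0 : Fin 6) ∈ Finset.univ.filter (fun i : Fin 6 => Sum.inl (v, i) ∈ s) :=
            Finset.mem_filter.mpr ⟨Finset.mem_univ _, hc⟩
          rw [hTv] at h0'
          exact absurd h0' (by decide)
        rw [if_neg h0m, hTv]; rfl
    intro c
    have h1 : (s.filter (fun x => g x = Sum.inr c)).card = 1 := by
      simpa using heq (Sum.inr c) (Finset.mem_univ _)
    obtain ⟨x, hx⟩ := Finset.card_eq_one.mp h1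
    have hxmem : x ∈ s.filter (fun x => g x = Sum.inr c) := by
      rw [hx]; exact Finset.mem_singleton_self x
    obtain ⟨hxs, hgx⟩ := Finset.mem_filter.mp hxmem
    rcases x with vi | p
    · simp [hg] at hgx
    have hpc : p.1.1 = c := by simpa [hg] using hgx
    refine ⟨p.1.2, by rw [← hpc]; exact p.2, ?_⟩
    have hadj : (SimpleGraph.fromRel R).Adj (Sum.inr p)
        (Sum.inl (p.1.2.1, attach p.1.1 p.1.2)) :=
      (hAdj _ _).mpr ⟨by simp, Or.inl ((hRiff _ _).mpr (Or.inr (Or.inr ⟨p, rfl, rfl⟩)))⟩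
    have hnot : Sum.inl (p.1.2.1, attach p.1.1 p.1.2) ∉ s := by
      intro hc2
      exact hind _ hxs _ hc2 (by simp) hadj
    have hnotT : attach p.1.1 p.1.2 ∉
        Finset.univ.filter (fun i : Fin 6 => Sum.inl (p.1.2.1, i) ∈ s) := by
      simp only [Finset.mem_filter, Finset.mem_univ, true_and]
      exact hnot
    rw [hTf p.1.2.1] at hnotT
    have hp2 := hpar p.1.1 p.1.2 p.2
    show (if Sum.inl (p.1.2.1, (0 : Fin 6)) ∈ s then true else false) = p.1.2.2
    by_cases hm : Sum.inl (p.1.2.1, (0 : Fin 6)) ∈ s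
    · rw [if_pos hm] at hnotT ⊢
      cases hb : p.1.2.2
      · rw [hb] at hp2
        simp only [Bool.false_eq_true, if_false] at hp2
        have hbt : bInd true = {0, 2, 4} := rfl
        rw [hbt] at hnotT
        exact absurd (fin6_even _ hp2) hnotT
      · rfl
    · rw [if_neg hm] at hnotT ⊢
      cases hb : p.1.2.2
      · rfl
      · rw [hb] at hp2
        simp only [if_true] at hp2
        have hbf : bInd false = {1, 3, 5} := rfl
        rw [hbf] at hnotT
        exact absurd (fin6_odd _ hp2) hnotT
  · -- backward: construct independent set
    rintro ⟨f, hf⟩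
    choose lit hlitmem hlitsat using hf
    set sA : Finset ((V × Fin 6) ⊕ {p : C × (V × Bool) // p.2 ∈ L p.1}) :=
      Finset.univ.biUnion (fun v : V => (bInd (f v)).image (fun i => Sum.inl (v, i))) with hsA
    set sB : Finset ((V × Fin 6) ⊕ {p : C × (V × Bool) // p.2 ∈ L p.1}) :=
      Finset.univ.image (fun c : C => Sum.inr ⟨(c, lit c), hlitmem c⟩) with hsB
    have hmemA : ∀ (v : V) (i : Fin 6), (Sum.inl (v, i) ∈ sA) ↔ i ∈ bInd (f v) := by
      intro v i
      simp only [hsA, Finset.mem_biUnion, Finset.mem_image, Finset.mem_univ, true_and,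
        Sum.inl.injEq, Prod.mk.injEq]
      constructor
      · rintro ⟨v', j, hj, rfl, rfl⟩; exact hj
      · intro hi; exact ⟨v, i, hi, rfl, rfl⟩
    have hnotB : ∀ (v : V) (i : Fin 6), (Sum.inl (v, i) : (V × Fin 6) ⊕ _) ∉ sB := by
      intro v i
      simp [hsB]
    have hnotA : ∀ p, (Sum.inr p : (V × Fin 6) ⊕ {p : C × (V × Bool) // p.2 ∈ L p.1}) ∉ sA := by
      intro p
      simp [hsA]
    have hmemB : ∀ p, (Sum.inr p : (V × Fin 6) ⊕ {p : C × (V × Bool) // p.2 ∈ L p.1}) ∈ sB ↔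
        ∃ c : C, p.1 = (c, lit c) := by
      intro p
      simp only [hsB, Finset.mem_image, Finset.mem_univ, true_and, Sum.inr.injEq]
      constructor
      · rintro ⟨c, hc⟩; exact ⟨c, by rw [← hc]⟩
      · rintro ⟨c, hc⟩; exact ⟨c, Subtype.ext hc.symm⟩
    have hdisj : Disjoint sA sB := by
      refine Finset.disjoint_left.mpr ?_
      intro x hx hx'
      rcases x with vi | p
      · exact hnotB vi.1 vi.2 hx'
      · exact hnotA p hx
    have hcardA : sA.card = 3 * Fintype.card V := by
      rw [hsA, Finset.card_biUnion]
      · have h3 : ∀ v : V, ((bInd (f v)).image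
            (fun i => (Sum.inl (v, i) : (V × Fin 6) ⊕ {p : C × (V × Bool) // p.2 ∈ L p.1}))).card = 3 := by
          intro v
          rw [Finset.card_image_of_injective _ (fun i j h => by simpa using h)]
          exact bInd_card _
        simp [h3, mul_comm]
      · intro v _ w _ hvw
        refine Finset.disjoint_left.mpr ?_
        intro x hx hx'
        simp only [Finset.mem_image] at hx hx'
        obtain ⟨i, -, rfl⟩ := hx
        obtain ⟨j, -, hj⟩ := hx'
        simp only [Sum.inl.injEq, Prod.mk.injEq] at hj
        exact hvw hj.1.symm
    have hcardB : sB.card = Fintype.card C := by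
      rw [hsB, Finset.card_image_of_injective, Finset.card_univ]
      intro c c' h
      simp only [Sum.inr.injEq, Subtype.mk.injEq, Prod.mk.injEq] at h
      exact h.1
    have hcards : (sA ∪ sB).card = 3 * Fintype.card V + Fintype.card C := by
      rw [Finset.card_union_of_disjoint hdisj, hcardA, hcardB]
    have hkey : ∀ x ∈ sA ∪ sB, ∀ y ∈ sA ∪ sB, ¬ R x y := by
      intro x hx y hy hRxy
      rw [hRiff] at hRxy
      have hinlmem : ∀ (v : V) (i : Fin 6), Sum.inl (v, i) ∈ sA ∪ sB → i ∈ bInd (f v) := by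
        intro v i hm
        rcases Finset.mem_union.mp hm with hm | hm
        · exact (hmemA v i).mp hm
        · exact absurd hm (hnotB v i)
      have hinrmem : ∀ p, (Sum.inr p : (V × Fin 6) ⊕ _) ∈ sA ∪ sB → ∃ c, p.1 = (c, lit c) := by
        intro p hm
        rcases Finset.mem_union.mp hm with hm | hm
        · exact absurd hm (hnotA p)
        · exact (hmemB p).mp hm
      rcases hRxy with ⟨v, i, rfl, rfl⟩ | ⟨p, q, rfl, rfl, hcc, hpq⟩ | ⟨p, rfl, rfl⟩
      · exact bInd_nadj (f v) i (hinlmem v i hx) (i + 1) (hinlmem v (i + 1) hy) rfl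
      · obtain ⟨c, hc⟩ := hinrmem p hx
        obtain ⟨c', hc'⟩ := hinrmem q hy
        rw [hc, hc'] at hcc
        simp only at hcc
        subst hcc
        exact hpq (Subtype.ext (hc.trans hc'.symm))
      · obtain ⟨c, hc⟩ := hinrmem p hx
        have hmem : attach p.1.1 p.1.2 ∈ bInd (f p.1.2.1) := hinlmem _ _ hy
        have h1 := bInd_par (f p.1.2.1) _ hmem
        have h2 := hpar p.1.1 p.1.2 p.2
        rw [hc] at h1 h2
        simp only at h1 h2
        rw [hlitsat c] at h1
        rw [h2] at h1
        cases hb : (lit c).2 <;> rw [hb] at h1 <;> simp at h1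
    have hmem : 3 * Fintype.card V + Fintype.card C ∈
        {n : ℕ | ∃ s : Finset ((V × Fin 6) ⊕ {p : C × (V × Bool) // p.2 ∈ L p.1}),
          s.card = n ∧ ∀ a ∈ s, ∀ b ∈ s, a ≠ b → ¬ (SimpleGraph.fromRel R).Adj a b} := by
      refine ⟨sA ∪ sB, hcards, ?_⟩
      intro a ha b hb hab hadj
      rcases ((hAdj a b).mp hadj).2 with hr | hr
      · exact hkey a ha b hb hr
      · exact hkey b hb a ha hr
    refine le_antisymm (csSup_le ⟨0, h0⟩ ?_) (le_csSup hbdd hmem)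
    rintro n ⟨s, rfl, hs⟩
    exact hub s hs
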